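/- Let n ≤ m be natural numbers, let a : Fin m → (Fin n → ℝ) be the rows of a system of linear inequalities and b : Fin m → ℝ, and let S be a subset of the row indices and p ∈ ℝⁿ a point such that p is the unique solution of the system aᵢ · x = bᵢ for all i ∈ S (i.e., {x ∈ ℝⁿ : ∀ i ∈ S, aᵢ · x = bᵢ} = {p}). Then there exists a subset S′ ⊆ S with exactly n elements such that p is the unique solution of the system aᵢ · x = bᵢ for all i ∈ S′. -/

import Mathlib

/-!
The solution set of a consistent system `φᵢ x = bᵢ` is `p + ⋂ ker φᵢ`, so `p` is the unique
solution exactly when the kernels meet in `0`, i.e. when the functionals `φᵢ` span the dual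
space. A spanning family of functionals contains a basis of the dual, which has `n` elements,
and the corresponding `n` equations already pin down `p`.
-/

open Module Submodule

theorem setOf_forall_map_eq_eq_singleton_iff {ι V M F : Type*} [AddCommGroup V] [AddCommGroup M]
    [FunLike F V M] [AddMonoidHomClass F V M] {f : ι → F} {b : ι → M} {S : Set ι} {p : V}
    (hp : ∀ i ∈ S, f i p = b i) :
    {x | ∀ i ∈ S, f i x = b i} = {p} ↔ ∀ y, (∀ i ∈ S, f i y = 0) → y = 0 := by
  constructor
  · intro h y hy
    have hpy : p + y ∈ {x | ∀ i ∈ S, f i x = b i} := fun i hi ↦ by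
      rw [map_add, hp i hi, hy i hi, add_zero]
    rw [h, Set.mem_singleton_iff, add_eq_left] at hpy
    exact hpy
  · intro h
    ext x
    refine ⟨fun hx ↦ sub_eq_zero.mp (h _ fun i hi ↦ ?_), fun hx i hi ↦ hx ▸ hp i hi⟩
    rw [map_sub, hx i hi, hp i hi, sub_self]

theorem Subspace.dualCoannihilator_eq_bot_iff {K V : Type*} [Field K] [AddCommGroup V]
    [Module K V] {W : Subspace K (Dual K V)} [FiniteDimensional K W] :
    W.dualCoannihilator = ⊥ ↔ W = ⊤ := by
  refine ⟨fun h ↦ ?_, fun h ↦ h ▸ dualCoannihilator_top⟩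
  rw [← dualCoannihilator_dualAnnihilator_eq (W := W), h, dualAnnihilator_bot]

theorem Module.Dual.span_image_eq_top_iff {ι K V : Type*} [Field K] [AddCommGroup V] [Module K V]
    [FiniteDimensional K V] {f : ι → Dual K V} {S : Set ι} :
    span K (f '' S) = ⊤ ↔ ∀ x, (∀ i ∈ S, f i x = 0) → x = 0 := by
  rw [← Subspace.dualCoannihilator_eq_bot_iff, Submodule.eq_bot_iff]
  simp only [← SetLike.mem_coe, coe_dualCoannihilator_span, Set.mem_ofPred_eq,
    Set.forall_mem_image]

theorem Finset.exists_subset_card_eq_finrank_span_image_eq {ι V : Type*} (K : Type*)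
    [DivisionRing K] [AddCommGroup V] [Module K V] (v : ι → V) (S : Finset ι) :
    ∃ S' ⊆ S, S'.card = finrank K (span K (v '' S)) ∧ span K (v '' S') = span K (v '' S) := by
  obtain ⟨B, hBS, -, hSB, hB⟩ :=
    exists_linearIndepOn_extension (linearIndepOn_empty K v) (Set.empty_subset (S : Set ι))
  obtain ⟨S', rfl⟩ := (S.finite_toSet.subset hBS).exists_finset_coe
  have hspan : span K (v '' S') = span K (v '' S) :=
    le_antisymm (span_mono (Set.image_mono hBS)) (span_le.mpr hSB)
  refine ⟨S', hBS, ?_, hspan⟩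
  rw [← hspan, Set.image_eq_range, finrank_span_eq_card hB]
  exact (Fintype.card_coe S').symm

theorem exists_n_hyperplanes_unique_intersection_general (n m : ℕ)
    (a : Fin m → (Fin n → ℝ)) (b : Fin m → ℝ) (S : Finset (Fin m)) (p : Fin n → ℝ)
    (hp : {x : Fin n → ℝ | ∀ i ∈ S, ∑ j, a i j * x j = b i} = {p}) :
    ∃ S' ⊆ S, S'.card = n ∧
      {x : Fin n → ℝ | ∀ i ∈ S', ∑ j, a i j * x j = b i} = {p} := by
  -- `f i x` unfolds to `∑ j, a i j * x j`, so `hp` is already a statement about the `f i`.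
  let f : Fin m → Dual ℝ (Fin n → ℝ) := fun i ↦ dotProductEquiv ℝ (Fin n) (a i)
  have hpS : ∀ i ∈ S, f i p = b i := hp.ge rfl
  have hspan : span ℝ (f '' S) = ⊤ :=
    Dual.span_image_eq_top_iff.mpr ((setOf_forall_map_eq_eq_singleton_iff hpS).mp hp)
  obtain ⟨S', hS'S, hcard, hS'span⟩ := Finset.exists_subset_card_eq_finrank_span_image_eq ℝ f S
  refine ⟨S', hS'S, ?_, ?_⟩
  · rw [hcard, hspan, finrank_top, Subspace.dual_finrank_eq, finrank_fin_fun]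
  · exact (setOf_forall_map_eq_eq_singleton_iff fun i hi ↦ hpS i (hS'S hi)).mpr
      (Dual.span_image_eq_top_iff.mp (hS'span.trans hspan))

theorem exists_n_hyperplanes_unique_intersection (n m : ℕ) (hnm : n ≤ m)
    (a : Fin m → (Fin n → ℝ)) (b : Fin m → ℝ) (S : Finset (Fin m)) (p : Fin n → ℝ)
    (hp : {x : Fin n → ℝ | ∀ i ∈ S, ∑ j, a i j * x j = b i} = {p}) :
    ∃ S' ⊆ S, S'.card = n ∧
      {x : Fin n → ℝ | ∀ i ∈ S', ∑ j, a i j * x j = b i} = {p} :=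
  exists_n_hyperplanes_unique_intersection_general n m a b S p hp
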